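/- Let G be a finite simple graph without isolated vertices and let H be a subgraph of G without isolated vertices. Then there exists a face F of the dual cosmological polytope C_G° that is combinatorially equivalent to the dual cosmological polytope C_H°, i.e. the poset of faces of C_G° contained in F, ordered by inclusion, is isomorphic to the poset of faces of C_H°. -/
import Mathlib


set_option linter.unusedSectionVars false
set_option linter.unusedVariables false

open Finset

variable {V : Type} [Fintype V] [DecidableEq V]

/-- A tube of the graph on vertex type `V` with edge set `E`: a nonempty connected
(not necessarily induced) subgraph, recorded by its vertex set and edge set.
(The field `verts_in` records that all vertices of a tube are vertices of the graph,
where, the graph having no isolated vertices, its vertex set is the set of endpoints of `E`.) -/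
structure Tube (E : Finset (Sym2 V)) where
  verts : Finset V
  edges : Finset (Sym2 V)
  nonempty : verts.Nonempty
  edges_sub : edges ⊆ E
  verts_in : ∀ v ∈ verts, ∃ e ∈ E, v ∈ e
  endpoints_mem : ∀ e ∈ edges, ∀ v ∈ e, v ∈ verts
  conn : ∀ u ∈ verts, ∀ w ∈ verts,
    Relation.ReflTransGen (fun a b => s(a, b) ∈ edges) u w

theorem Tube.ext' {E : Finset (Sym2 V)} {a b : Tube E}
    (h1 : a.verts = b.verts) (h2 : a.edges = b.edges) : a = b := by
  cases a; cases b; subst h1; subst h2; rfl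

instance {E : Finset (Sym2 V)} : DecidableEq (Tube E) := fun a b =>
  decidable_of_iff (a.verts = b.verts ∧ a.edges = b.edges)
    ⟨fun h => Tube.ext' h.1 h.2, fun h => by subst h; exact ⟨rfl, rfl⟩⟩

noncomputable instance {E : Finset (Sym2 V)} : Fintype (Tube E) :=
  Fintype.ofInjective (fun t => (t.verts, t.edges))
    (fun a b h => Tube.ext' (congrArg Prod.fst h) (congrArg Prod.snd h))

/-- The coordinates of the ambient space `ℝ^(V ⊔ E)`. -/
abbrev Coord (E : Finset (Sym2 V)) := V ⊕ {e : Sym2 V // e ∈ E}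

/-- The standard inner product on `ℝ^(V ⊔ E)`. -/
def dot {E : Finset (Sym2 V)} (x y : Coord E → ℝ) : ℝ := ∑ i, x i * y i

/-- The facet normal `h_t = Σ_{v ∈ V(t)} x_v + Σ_{e ∈ E∖E(t)} |e ∩ V(t)|·y_e`. -/
def hvec {E : Finset (Sym2 V)} (t : Tube E) : Coord E → ℝ := fun i =>
  match i with
  | Sum.inl v => if v ∈ t.verts then 1 else 0
  | Sum.inr e => if e.1 ∈ t.edges then 0
      else ((t.verts.filter (fun v => v ∈ e.1)).card : ℝ)

/-- `|h_t|₁`, the sum of the coordinates of `h_t`. -/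
def ell {E : Finset (Sym2 V)} (t : Tube E) : ℝ := ∑ i, hvec t i

/-- `z_t = h_t / |h_t|₁`. -/
noncomputable def zvec {E : Finset (Sym2 V)} (t : Tube E) : Coord E → ℝ := (ell t)⁻¹ • hvec t

/-- The vertices `p_e, p_{e,v}, p_{e,w}` of the cosmological polytope (note that
`p_{e,w}` is obtained from `p_{e,v}` by exchanging the roles of `v` and `w`). -/
def cosmoVerts (E : Finset (Sym2 V)) : Set (Coord E → ℝ) :=
  {q | ∃ (v w : V) (he : s(v, w) ∈ E),
      q = Pi.single (Sum.inl v) 1 + Pi.single (Sum.inl w) 1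
            - Pi.single (Sum.inr ⟨s(v, w), he⟩) 1 ∨
      q = Pi.single (Sum.inl v) 1 - Pi.single (Sum.inl w) 1
            + Pi.single (Sum.inr ⟨s(v, w), he⟩) 1}

/-- The cosmological polytope `C_G`. -/
def cosmo (E : Finset (Sym2 V)) : Set (Coord E → ℝ) := convexHull ℝ (cosmoVerts E)

/-- The dual cosmological polytope `C_G° = conv{ z_t : t a tube }`. -/
def dualCosmo (E : Finset (Sym2 V)) : Set (Coord E → ℝ) :=
  convexHull ℝ {z | ∃ t : Tube E, z = zvec t}

/-- The affine hyperplane `H` of points whose coordinates sum to `1`. -/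
def hyperplaneH (E : Finset (Sym2 V)) : Set (Coord E → ℝ) := {z | ∑ i, z i = 1}

/-- A tubing: a set of tubes, pairwise disjoint or nested. -/
def IsTubing (E : Finset (Sym2 V)) (T : Finset (Tube E)) : Prop :=
  ∀ t₁ ∈ T, ∀ t₂ ∈ T,
    Disjoint t₁.verts t₂.verts ∨ t₁.edges ⊆ t₂.edges ∨ t₂.edges ⊆ t₁.edges

/-- A maximal tubing: a tubing maximal under inclusion. -/
def IsMaxTubing (E : Finset (Sym2 V)) (T : Finset (Tube E)) : Prop :=
  IsTubing E T ∧ ∀ T' : Finset (Tube E), IsTubing E T' → T ⊆ T' → T' = T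

/-- `F` is a face of the polytope `P`: `P` itself, `∅`, or the intersection of `P`
with a supporting hyperplane. -/
def IsFace {E : Finset (Sym2 V)} (F P : Set (Coord E → ℝ)) : Prop :=
  F = P ∨ F = ∅ ∨
    ∃ (a : Coord E → ℝ) (c : ℝ), (∀ x ∈ P, c ≤ dot a x) ∧ F = {x | x ∈ P ∧ dot a x = c}


section Generic
variable {E : Finset (Sym2 V)}

lemma isLinearMap_dot (a : Coord E → ℝ) : IsLinearMap ℝ (dot a) := by
  constructor
  · intro x y; simp [dot, mul_add, Finset.sum_add_distrib]
  · intro c x; simp [dot, Finset.mul_sum, mul_add, mul_left_comm]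

lemma isLinearMap_coordSum : IsLinearMap ℝ (fun x : Coord E → ℝ => ∑ i, x i) := by
  constructor
  · intro x y; simp [Finset.sum_add_distrib]
  · intro c x; simp [Finset.mul_sum, mul_add]

lemma dot_smul_right (a : Coord E → ℝ) (c : ℝ) (x : Coord E → ℝ) :
    dot a (c • x) = c * dot a x := (isLinearMap_dot a).2 c x

lemma hvec_nonneg (t : Tube E) (i : Coord E) : 0 ≤ hvec t i := by
  cases i <;> simp only [hvec] <;> split <;> positivity

lemma ell_pos (t : Tube E) : 0 < ell t := by
  obtain ⟨v, hv⟩ := t.nonempty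
  have h1 : (1:ℝ) ≤ ell t := by
    have : hvec t (Sum.inl v) = 1 := by simp [hvec, hv]
    calc (1:ℝ) = hvec t (Sum.inl v) := this.symm
    _ ≤ ell t := Finset.single_le_sum (fun i _ => hvec_nonneg t i) (Finset.mem_univ _)
  linarith

lemma zvec_coordSum (t : Tube E) : ∑ i, zvec t i = 1 := by
  have := ell_pos t
  simp only [zvec, Pi.smul_apply, smul_eq_mul, ← Finset.mul_sum]
  rw [← ell]; field_simp

lemma zvec_mem (t : Tube E) : zvec t ∈ dualCosmo E :=
  subset_convexHull ℝ _ ⟨t, rfl⟩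

lemma dualCosmo_coordSum {x : Coord E → ℝ} (hx : x ∈ dualCosmo E) : ∑ i, x i = 1 := by
  have : dualCosmo E ⊆ {x : Coord E → ℝ | ∑ i, x i = 1} := by
    apply convexHull_min
    · rintro z ⟨t, rfl⟩; exact zvec_coordSum t
    · exact convex_hyperplane isLinearMap_coordSum 1
  exact this hx

lemma dot_zvec (b : Coord E → ℝ) (t : Tube E) :
    dot b (zvec t) = (ell t)⁻¹ * dot b (hvec t) := dot_smul_right b _ _

lemma dot_zvec_nonneg {b : Coord E → ℝ} {t : Tube E} (h : 0 ≤ dot b (hvec t)) :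
    0 ≤ dot b (zvec t) := by
  rw [dot_zvec]; exact mul_nonneg (inv_nonneg.2 (ell_pos t).le) h

lemma dot_zvec_eq_zero_iff (b : Coord E → ℝ) (t : Tube E) :
    dot b (zvec t) = 0 ↔ dot b (hvec t) = 0 := by
  rw [dot_zvec]
  constructor
  · intro h
    rcases mul_eq_zero.1 h with h | h
    · exact absurd h (by have := ell_pos t; positivity)
    · exact h
  · intro h; rw [h, mul_zero]

lemma dualCosmo_dot_nonneg {b : Coord E → ℝ} (hb : ∀ t : Tube E, 0 ≤ dot b (hvec t))
    {x : Coord E → ℝ} (hx : x ∈ dualCosmo E) : 0 ≤ dot b x := by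
  have : dualCosmo E ⊆ {x : Coord E → ℝ | 0 ≤ dot b x} := by
    apply convexHull_min
    · rintro z ⟨t, rfl⟩; exact dot_zvec_nonneg (hb t)
    · exact convex_halfSpace_ge (isLinearMap_dot b) 0
  exact this hx

end Generic

section Generic2
variable {E : Finset (Sym2 V)}

lemma dualCosmo_eq_hull_finset :
    dualCosmo E = convexHull ℝ ↑(Finset.image (zvec (E := E)) Finset.univ) := by
  unfold dualCosmo
  congr 1
  ext z
  simp [eq_comm]

/-- Normal-form face. -/
def NormFace (E : Finset (Sym2 V)) (F' : Set (Coord E → ℝ)) : Prop :=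
  ∃ b : Coord E → ℝ, (∀ t : Tube E, 0 ≤ dot b (hvec t)) ∧
    F' = {x | x ∈ dualCosmo E ∧ dot b x = 0}

lemma face_eq_hull {b : Coord E → ℝ} (hb : ∀ t : Tube E, 0 ≤ dot b (hvec t)) :
    {x | x ∈ dualCosmo E ∧ dot b x = 0}
      = convexHull ℝ {z | ∃ t : Tube E, dot b (hvec t) = 0 ∧ z = zvec t} := by
  apply Set.Subset.antisymm
  · rintro x ⟨hxP, hx0⟩
    rw [dualCosmo_eq_hull_finset, Finset.convexHull_eq] at hxP
    obtain ⟨w, hw0, hw1, hwx⟩ := hxP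
    set s : Finset (Coord E → ℝ) := Finset.image (zvec (E := E)) Finset.univ with hs
    -- x = ∑ y in s, w y • y
    have hxsum : x = ∑ y ∈ s, w y • y := by
      rw [← hwx, Finset.centerMass, hw1]; simp
    have hdotsum : dot b x = ∑ y ∈ s, w y * dot b y := by
      rw [hxsum]
      simp only [dot, Finset.sum_apply, Pi.smul_apply, smul_eq_mul, Finset.mul_sum]
      rw [Finset.sum_comm]
      exact Finset.sum_congr rfl fun y _ => Finset.sum_congr rfl fun i _ => by ring
    -- each generator has nonneg dot
    have hdnn : ∀ y ∈ s, 0 ≤ dot b y := by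
      intro y hy
      simp only [hs, Finset.mem_image] at hy
      obtain ⟨t, -, rfl⟩ := hy
      exact dot_zvec_nonneg (hb t)
    have hzero : ∀ y ∈ s, w y ≠ 0 → dot b y = 0 := by
      intro y hy hwy
      by_contra hne
      have hpos : 0 < w y * dot b y :=
        mul_pos (lt_of_le_of_ne (hw0 y hy) (Ne.symm hwy)) (lt_of_le_of_ne (hdnn y hy) (Ne.symm hne))
      have hsumpos : 0 < ∑ y ∈ s, w y * dot b y := by
        apply Finset.sum_pos' (fun z hz => mul_nonneg (hw0 z hz) (hdnn z hz)) ⟨y, hy, hpos⟩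
      rw [← hdotsum, hx0] at hsumpos; exact lt_irrefl _ hsumpos
    -- restrict to support
    have hsupp : x = (s.filter (fun y => w y ≠ 0)).centerMass w id := by
      rw [Finset.centerMass_filter_ne_zero, Finset.centerMass, hw1]
      simpa using hxsum
    rw [hsupp]
    apply Finset.centerMass_mem_convexHull
    · intro y hy; exact hw0 y (Finset.mem_filter.1 hy).1
    · rw [Finset.sum_filter_ne_zero, hw1]; exact one_pos
    · intro y hy
      obtain ⟨hy, hwy⟩ := Finset.mem_filter.1 hy
      simp only [hs, Finset.mem_image] at hy
      obtain ⟨t, -, rfl⟩ := hy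
      have h0 : dot b (zvec t) = 0 := hzero _ (by simp [hs]) hwy
      exact ⟨t, (dot_zvec_eq_zero_iff b t).1 h0, rfl⟩
  · apply convexHull_min
    · rintro z ⟨t, ht0, rfl⟩
      exact ⟨zvec_mem t, (dot_zvec_eq_zero_iff b t).2 ht0⟩
    · exact Convex.inter (convex_convexHull ℝ _) (convex_hyperplane (isLinearMap_dot b) 0)

lemma normFace_isFace {F' : Set (Coord E → ℝ)} (h : NormFace E F') :
    IsFace F' (dualCosmo E) := by
  obtain ⟨b, hb, rfl⟩ := h
  exact Or.inr (Or.inr ⟨b, 0, fun x hx => dualCosmo_dot_nonneg hb hx, rfl⟩)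

lemma zvec_mem_normFace {b : Coord E → ℝ} (t : Tube E) :
    zvec t ∈ {x | x ∈ dualCosmo E ∧ dot b x = 0} ↔ dot b (hvec t) = 0 := by
  simp only [Set.mem_setOf_eq, zvec_mem t, true_and]
  exact dot_zvec_eq_zero_iff b t

lemma isFace_iff {F' : Set (Coord E → ℝ)} :
    IsFace F' (dualCosmo E) ↔ F' = ∅ ∨ NormFace E F' := by
  constructor
  · rintro (rfl | rfl | ⟨a, c, hac, rfl⟩)
    · refine Or.inr ⟨0, ?_, ?_⟩
      · intro t; simp [dot]
      · ext x; simp [dot]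
    · exact Or.inl rfl
    · refine Or.inr ⟨fun i => a i - c, ?_, ?_⟩
      · intro t
        have h1 : dot (fun i => a i - c) (hvec t) = ell t * dot (fun i => a i - c) (zvec t) := by
          rw [dot_zvec]
          field_simp [(ell_pos t).ne']
        have h2 : dot (fun i => a i - c) (zvec t) = dot a (zvec t) - c := by
          simp only [dot, sub_mul, Finset.sum_sub_distrib]
          rw [show ∑ i, c * zvec t i = c by rw [← Finset.mul_sum, zvec_coordSum, mul_one]]
        rw [h1, h2]
        have := hac _ (zvec_mem t)
        nlinarith [ell_pos t]
      · ext x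
        simp only [Set.mem_setOf_eq, and_congr_right_iff]
        intro hx
        have hsum := dualCosmo_coordSum hx
        have : dot (fun i => a i - c) x = dot a x - c := by
          simp only [dot, sub_mul, Finset.sum_sub_distrib]
          rw [show ∑ i, c * x i = c by rw [← Finset.mul_sum, hsum, mul_one]]
        rw [this]
        constructor <;> intro h <;> linarith
  · rintro (rfl | h)
    · exact Or.inr (Or.inl rfl)
    · exact normFace_isFace h

end Generic2
section Specific
variable (E E_H : Finset (Sym2 V))

/-- The embedding of tubes of `H` into tubes of `G`. -/
def iota (hHE : E_H ⊆ E) (t : Tube E_H) : Tube E where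
  verts := t.verts
  edges := t.edges
  nonempty := t.nonempty
  edges_sub := t.edges_sub.trans hHE
  verts_in := fun v hv => by
    obtain ⟨e, he, hve⟩ := t.verts_in v hv
    exact ⟨e, hHE he, hve⟩
  endpoints_mem := t.endpoints_mem
  conn := t.conn

lemma iota_injective (hHE : E_H ⊆ E) : Function.Injective (iota E E_H hHE) := by
  intro a b h
  have h1 := congrArg Tube.verts h
  have h2 := congrArg Tube.edges h
  exact Tube.ext' h1 h2

/-- A tube of `G` that is a tube of `H`. -/
def isH (t : Tube E) : Prop :=
  (∀ v ∈ t.verts, ∃ e ∈ E_H, v ∈ e) ∧ t.edges ⊆ E_H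

lemma isH_iota (hHE : E_H ⊆ E) (t : Tube E_H) : isH E E_H (iota E E_H hHE t) :=
  ⟨t.verts_in, t.edges_sub⟩

lemma exists_iota_of_isH (hHE : E_H ⊆ E) {t : Tube E} (h : isH E E_H t) :
    ∃ t' : Tube E_H, t = iota E E_H hHE t' := by
  refine ⟨⟨t.verts, t.edges, t.nonempty, h.2, h.1, t.endpoints_mem, t.conn⟩, ?_⟩
  apply Tube.ext' <;> rfl

/-- The supporting functional for the face `F`. -/
def aF : Coord E → ℝ := fun i =>
  match i with
  | Sum.inl v =>
      if (∃ e ∈ E_H, v ∈ e) then ((E.filter fun e => e ∉ E_H ∧ v ∈ e).card : ℝ)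
      else ((E.filter fun e => v ∈ e).card : ℝ) + 1
  | Sum.inr e => if e.1 ∈ E_H then 0 else -1

/-- Per-vertex contribution of `dot aF (hvec t)`. -/
def pv (t : Tube E) (v : V) : ℝ :=
  aF E E_H (Sum.inl v) - ((E.filter fun e => e ∉ E_H ∧ v ∈ e ∧ e ∉ t.edges).card : ℝ)

lemma dot_expand (a : Coord E → ℝ) (t : Tube E) :
    dot a (hvec t) = (∑ v ∈ t.verts, a (Sum.inl v))
      + ∑ e ∈ E.attach, (if e.1 ∈ t.edges then 0
          else a (Sum.inr e) * ((t.verts.filter (· ∈ e.1)).card : ℝ)) := by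
  rw [dot, Fintype.sum_sum_type]
  congr 1
  · have h1 : ∀ v : V, a (Sum.inl v) * hvec t (Sum.inl v)
        = if v ∈ t.verts then a (Sum.inl v) else 0 := by
      intro v; simp only [hvec]; split <;> simp
    rw [Finset.sum_congr rfl (fun v _ => h1 v)]
    rw [← Finset.sum_filter]
    congr 1
    ext v; simp
  · rw [show (Finset.univ : Finset {e : Sym2 V // e ∈ E}) = E.attach from rfl]
    apply Finset.sum_congr rfl
    intro e _
    simp only [hvec]
    split <;> simp [mul_comm]

lemma dot_aF_eq (t : Tube E) :
    dot (aF E E_H) (hvec t) = ∑ v ∈ t.verts, pv E E_H t v := by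
  rw [dot_expand]
  have h2 : ∀ e ∈ E.attach, (if e.1 ∈ t.edges then 0
      else aF E E_H (Sum.inr e) * ((t.verts.filter (· ∈ e.1)).card : ℝ))
      = -(if e.1 ∉ E_H ∧ e.1 ∉ t.edges then ((t.verts.filter (· ∈ e.1)).card : ℝ) else 0) := by
    intro e _
    simp only [aF]
    by_cases h1 : e.1 ∈ t.edges <;> by_cases h2 : e.1 ∈ E_H <;> simp [h1, h2]
  rw [Finset.sum_congr rfl h2, Finset.sum_neg_distrib]
  rw [Finset.sum_attach E (fun e => if e ∉ E_H ∧ e ∉ t.edges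
      then ((t.verts.filter (· ∈ e)).card : ℝ) else 0)]
  have h3 : ∑ e ∈ E, (if e ∉ E_H ∧ e ∉ t.edges then ((t.verts.filter (· ∈ e)).card : ℝ) else 0)
      = ∑ v ∈ t.verts, ((E.filter fun e => e ∉ E_H ∧ v ∈ e ∧ e ∉ t.edges).card : ℝ) := by
    have h4 : ∀ e ∈ E, (if e ∉ E_H ∧ e ∉ t.edges then ((t.verts.filter (· ∈ e)).card : ℝ) else 0)
        = ∑ v ∈ t.verts, (if e ∉ E_H ∧ v ∈ e ∧ e ∉ t.edges then (1:ℝ) else 0) := by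
      intro e _
      by_cases h : e ∉ E_H ∧ e ∉ t.edges
      · rw [if_pos h, Finset.card_filter]
        push_cast
        apply Finset.sum_congr rfl
        intro v _
        simp [h.1, h.2]
      · rw [if_neg h]
        rw [not_and_or] at h
        symm
        apply Finset.sum_eq_zero
        intro v _
        rcases h with h | h <;> simp_all
    rw [Finset.sum_congr rfl h4, Finset.sum_comm]
    apply Finset.sum_congr rfl
    intro v _
    rw [Finset.card_filter]
    push_cast
    rfl
  rw [h3, ← sub_eq_add_neg, ← Finset.sum_sub_distrib]
  rfl

end Specific
section Specific2
variable (E E_H : Finset (Sym2 V))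

lemma pv_nonneg (t : Tube E) {v : V} (hv : v ∈ t.verts) : 0 ≤ pv E E_H t v := by
  unfold pv aF
  by_cases h : ∃ e ∈ E_H, v ∈ e
  · simp only [h, if_true]
    have hsub : (E.filter fun e => e ∉ E_H ∧ v ∈ e ∧ e ∉ t.edges)
        ⊆ (E.filter fun e => e ∉ E_H ∧ v ∈ e) := by
      intro e he
      simp only [Finset.mem_filter] at *
      tauto
    have := Finset.card_le_card hsub
    have : ((E.filter fun e => e ∉ E_H ∧ v ∈ e ∧ e ∉ t.edges).card : ℝ)
        ≤ ((E.filter fun e => e ∉ E_H ∧ v ∈ e).card : ℝ) := by exact_mod_cast this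
    linarith
  · simp only [h, if_false]
    have hsub : (E.filter fun e => e ∉ E_H ∧ v ∈ e ∧ e ∉ t.edges)
        ⊆ (E.filter fun e => v ∈ e) := by
      intro e he
      simp only [Finset.mem_filter] at *
      tauto
    have := Finset.card_le_card hsub
    have : ((E.filter fun e => e ∉ E_H ∧ v ∈ e ∧ e ∉ t.edges).card : ℝ)
        ≤ ((E.filter fun e => v ∈ e).card : ℝ) := by exact_mod_cast this
    linarith

lemma dot_aF_nonneg (t : Tube E) : 0 ≤ dot (aF E E_H) (hvec t) := by
  rw [dot_aF_eq]
  exact Finset.sum_nonneg fun v hv => pv_nonneg E E_H t hv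

lemma one_le_dot_aF {t : Tube E} (h : ¬ isH E E_H t) : 1 ≤ dot (aF E E_H) (hvec t) := by
  rw [dot_aF_eq]
  have key : ∃ v ∈ t.verts, 1 ≤ pv E E_H t v := by
    unfold isH at h
    rw [not_and_or] at h
    have main : ∀ v ∈ t.verts, (¬ ∃ e ∈ E_H, v ∈ e) → 1 ≤ pv E E_H t v := by
      intro v hv hnv
      unfold pv aF
      simp only [hnv, if_false]
      have hsub : (E.filter fun e => e ∉ E_H ∧ v ∈ e ∧ e ∉ t.edges)
          ⊆ (E.filter fun e => v ∈ e) := by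
        intro e he
        simp only [Finset.mem_filter] at *
        tauto
      have := Finset.card_le_card hsub
      have : ((E.filter fun e => e ∉ E_H ∧ v ∈ e ∧ e ∉ t.edges).card : ℝ)
          ≤ ((E.filter fun e => v ∈ e).card : ℝ) := by exact_mod_cast this
      linarith
    rcases h with h | h
    · push_neg at h
      obtain ⟨v, hv, hnv⟩ := h
      exact ⟨v, hv, main v hv (by simpa using hnv)⟩
    · rw [Finset.not_subset] at h
      obtain ⟨e₀, he₀, he₀H⟩ := h
      set v₀ := e₀.out.1 with hv₀def
      have hv₀e : v₀ ∈ e₀ := Sym2.out_fst_mem e₀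
      have hv₀ : v₀ ∈ t.verts := t.endpoints_mem e₀ he₀ v₀ hv₀e
      refine ⟨v₀, hv₀, ?_⟩
      by_cases hVH : ∃ e ∈ E_H, v₀ ∈ e
      · unfold pv aF
        simp only [hVH, if_true]
        have hBA : (E.filter fun e => e ∉ E_H ∧ v₀ ∈ e ∧ e ∉ t.edges)
            ⊂ (E.filter fun e => e ∉ E_H ∧ v₀ ∈ e) := by
          constructor
          · intro e he
            simp only [Finset.mem_filter] at *
            tauto
          · intro hAB
            have he₀A : e₀ ∈ E.filter fun e => e ∉ E_H ∧ v₀ ∈ e := by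
              simp only [Finset.mem_filter]
              exact ⟨t.edges_sub he₀, he₀H, hv₀e⟩
            have := hAB he₀A
            simp only [Finset.mem_filter] at this
            exact this.2.2.2 he₀
        have hlt := Finset.card_lt_card hBA
        have : ((E.filter fun e => e ∉ E_H ∧ v₀ ∈ e ∧ e ∉ t.edges).card : ℝ) + 1
            ≤ ((E.filter fun e => e ∉ E_H ∧ v₀ ∈ e).card : ℝ) := by exact_mod_cast hlt
        linarith
      · exact main v₀ hv₀ hVH
  obtain ⟨v, hv, h1⟩ := key
  calc (1:ℝ) ≤ pv E E_H t v := h1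
  _ ≤ ∑ v ∈ t.verts, pv E E_H t v :=
      Finset.single_le_sum (fun u hu => pv_nonneg E E_H t hu) hv

lemma dot_aF_eq_zero {t : Tube E} (h : isH E E_H t) : dot (aF E E_H) (hvec t) = 0 := by
  rw [dot_aF_eq]
  apply Finset.sum_eq_zero
  intro v hv
  have hVH : ∃ e ∈ E_H, v ∈ e := h.1 v hv
  unfold pv aF
  simp only [hVH, if_true]
  have : (E.filter fun e => e ∉ E_H ∧ v ∈ e ∧ e ∉ t.edges)
      = (E.filter fun e => e ∉ E_H ∧ v ∈ e) := by
    apply Finset.filter_congr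
    intro e he
    constructor
    · tauto
    · rintro ⟨h1, h2⟩
      refine ⟨h1, h2, fun het => h1 (h.2 het)⟩
  rw [this, sub_self]

lemma isH_of_dot_aF_eq_zero {t : Tube E} (h : dot (aF E E_H) (hvec t) = 0) : isH E E_H t := by
  by_contra hn
  have := one_le_dot_aF E E_H hn
  linarith

/-- The face `F` of `C_G°` that is combinatorially `C_H°`. -/
def Fface : Set (Coord E → ℝ) := {x | x ∈ dualCosmo E ∧ dot (aF E E_H) x = 0}

lemma normFace_Fface : NormFace E (Fface E E_H) :=
  ⟨aF E E_H, dot_aF_nonneg E E_H, rfl⟩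

lemma isFace_Fface : IsFace (Fface E E_H) (dualCosmo E) :=
  normFace_isFace (normFace_Fface E E_H)

lemma zvec_mem_Fface (t : Tube E) : zvec t ∈ Fface E E_H ↔ isH E E_H t := by
  rw [Fface, zvec_mem_normFace]
  exact ⟨isH_of_dot_aF_eq_zero E E_H, dot_aF_eq_zero E E_H⟩

end Specific2
section Transfer
variable (E E_H : Finset (Sym2 V))

/-- Pull a functional on `ℝ^(V ⊔ E)` back to `ℝ^(V ⊔ E_H)`. -/
def pull (hHE : E_H ⊆ E) (b : Coord E → ℝ) : Coord E_H → ℝ := fun i =>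
  match i with
  | Sum.inl v => b (Sum.inl v)
      + ∑ e ∈ E.attach, (if e.1 ∉ E_H ∧ v ∈ e.1 then b (Sum.inr e) else 0)
  | Sum.inr e => b (Sum.inr ⟨e.1, hHE e.2⟩)

/-- Extend a functional on `ℝ^(V ⊔ E_H)` by zero to `ℝ^(V ⊔ E)`. -/
def extd (b : Coord E_H → ℝ) : Coord E → ℝ := fun i =>
  match i with
  | Sum.inl v => b (Sum.inl v)
  | Sum.inr e => if h : e.1 ∈ E_H then b (Sum.inr ⟨e.1, h⟩) else 0

lemma pull_extd (hHE : E_H ⊆ E) (b : Coord E_H → ℝ) : pull E E_H hHE (extd E E_H b) = b := by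
  funext i
  cases i with
  | inl v =>
    simp only [pull, extd]
    have : ∀ e ∈ E.attach,
        (if e.1 ∉ E_H ∧ v ∈ e.1 then
          (if h : e.1 ∈ E_H then b (Sum.inr ⟨e.1, h⟩) else 0) else 0) = 0 := by
      intro e _
      by_cases h : e.1 ∉ E_H ∧ v ∈ e.1
      · rw [if_pos h, dif_neg h.1]
      · rw [if_neg h]
    rw [Finset.sum_congr rfl this]
    simp
  | inr e =>
    simp only [pull, extd, dif_pos e.2]

/-- Bare version of a functional on edge coordinates. -/
def bb (b : Coord E → ℝ) : Sym2 V → ℝ := fun e =>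
  if h : e ∈ E then b (Sum.inr ⟨e, h⟩) else 0

lemma dot_pull (hHE : E_H ⊆ E) (b : Coord E → ℝ) (t : Tube E_H) :
    dot b (hvec (iota E E_H hHE t)) = dot (pull E E_H hHE b) (hvec t) := by
  have hverts : (iota E E_H hHE t).verts = t.verts := rfl
  have hedges : (iota E E_H hHE t).edges = t.edges := rfl
  rw [dot_expand, dot_expand, hverts, hedges]
  -- bare edge-term function
  set f : Sym2 V → ℝ := fun e => if e ∈ t.edges then 0
      else bb E b e * ((t.verts.filter (· ∈ e)).card : ℝ) with hf
  have hL : ∑ e ∈ E.attach, (if e.1 ∈ t.edges then 0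
        else b (Sum.inr e) * ((t.verts.filter (· ∈ e.1)).card : ℝ))
      = ∑ e ∈ E, f e := by
    rw [← Finset.sum_attach E f]
    apply Finset.sum_congr rfl
    intro e _
    simp only [hf, bb, dif_pos e.2]
  have hR : ∑ e ∈ E_H.attach, (if e.1 ∈ t.edges then 0
        else b (Sum.inr ⟨e.1, hHE e.2⟩) * ((t.verts.filter (· ∈ e.1)).card : ℝ))
      = ∑ e ∈ E_H, f e := by
    rw [← Finset.sum_attach E_H f]
    apply Finset.sum_congr rfl
    intro e _
    simp only [hf, bb, dif_pos (hHE e.2)]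
  have hinner : ∀ v : V, ∑ e ∈ E.attach, (if e.1 ∉ E_H ∧ v ∈ e.1 then b (Sum.inr e) else 0)
      = ∑ e ∈ E, (if e ∉ E_H ∧ v ∈ e then bb E b e else 0) := by
    intro v
    rw [← Finset.sum_attach E (fun e => if e ∉ E_H ∧ v ∈ e then bb E b e else 0)]
    apply Finset.sum_congr rfl
    intro e _
    simp only [bb, dif_pos e.2]
  simp only [pull]
  rw [hL, hR, Finset.sum_add_distrib]
  have key : ∑ e ∈ E, f e - ∑ e ∈ E_H, f e
      = ∑ v ∈ t.verts, ∑ e ∈ E, (if e ∉ E_H ∧ v ∈ e then bb E b e else 0) := by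
    have hsdiff : ∑ e ∈ E \ E_H, f e + ∑ e ∈ E_H, f e = ∑ e ∈ E, f e :=
      Finset.sum_sdiff hHE
    have step1 : ∑ e ∈ E \ E_H, f e
        = ∑ e ∈ E \ E_H, ∑ v ∈ t.verts, (if v ∈ e then bb E b e else 0) := by
      apply Finset.sum_congr rfl
      intro e he
      rw [Finset.mem_sdiff] at he
      have het : e ∉ t.edges := fun h => he.2 (t.edges_sub h)
      simp only [hf, if_neg het, Finset.card_filter]
      push_cast
      rw [Finset.mul_sum]
      apply Finset.sum_congr rfl
      intro v _
      by_cases hv : v ∈ e <;> simp [hv]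
    have step2 : ∑ e ∈ E \ E_H, ∑ v ∈ t.verts, (if v ∈ e then bb E b e else 0)
        = ∑ v ∈ t.verts, ∑ e ∈ E \ E_H, (if v ∈ e then bb E b e else 0) :=
      Finset.sum_comm
    have step3 : ∀ v : V, ∑ e ∈ E \ E_H, (if v ∈ e then bb E b e else 0)
        = ∑ e ∈ E, (if e ∉ E_H ∧ v ∈ e then bb E b e else 0) := by
      intro v
      rw [Finset.sdiff_eq_filter, Finset.sum_filter]
      apply Finset.sum_congr rfl
      intro e _
      by_cases h1 : e ∈ E_H <;> by_cases h2 : v ∈ e <;> simp [h1, h2]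
    have step4 : ∑ e ∈ E \ E_H, f e
        = ∑ v ∈ t.verts, ∑ e ∈ E, (if e ∉ E_H ∧ v ∈ e then bb E b e else 0) := by
      rw [step1, step2]
      exact Finset.sum_congr rfl (fun v _ => step3 v)
    linarith [hsdiff, step4]
  have hinner' : ∑ v ∈ t.verts, ∑ e ∈ E.attach,
        (if e.1 ∉ E_H ∧ v ∈ e.1 then b (Sum.inr e) else 0)
      = ∑ v ∈ t.verts, ∑ e ∈ E, (if e ∉ E_H ∧ v ∈ e then bb E b e else 0) :=
    Finset.sum_congr rfl (fun v _ => hinner v)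
  linarith [key, hinner']

lemma dot_extd (hHE : E_H ⊆ E) (b : Coord E_H → ℝ) (t : Tube E_H) :
    dot (extd E E_H b) (hvec (iota E E_H hHE t)) = dot b (hvec t) := by
  rw [dot_pull, pull_extd]

end Transfer
section Construct
variable (E E_H : Finset (Sym2 V))

/-- Big constant used to push the lifted functional above all non-`H` tubes. -/
noncomputable def MB (b : Coord E_H → ℝ) : ℝ :=
  1 + ∑ t : Tube E, |dot (extd E E_H b) (hvec t)|

/-- The lifted functional on `ℝ^(V ⊔ E)`. -/
noncomputable def bGf (b : Coord E_H → ℝ) : Coord E → ℝ := fun i =>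
  extd E E_H b i + MB E E_H b * aF E E_H i

lemma one_le_MB (b : Coord E_H → ℝ) : 1 ≤ MB E E_H b := by
  unfold MB
  have : (0:ℝ) ≤ ∑ t : Tube E, |dot (extd E E_H b) (hvec t)| :=
    Finset.sum_nonneg fun t _ => abs_nonneg _
  linarith

lemma abs_le_MB (b : Coord E_H → ℝ) (s : Tube E) :
    |dot (extd E E_H b) (hvec s)| ≤ MB E E_H b - 1 := by
  unfold MB
  have := Finset.single_le_sum (f := fun t : Tube E => |dot (extd E E_H b) (hvec t)|)
    (fun t _ => abs_nonneg _) (Finset.mem_univ s)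
  linarith

lemma dot_bGf (b : Coord E_H → ℝ) (x : Coord E → ℝ) :
    dot (bGf E E_H b) x = dot (extd E E_H b) x + MB E E_H b * dot (aF E E_H) x := by
  simp [dot, bGf, add_mul, Finset.sum_add_distrib, Finset.mul_sum, mul_add, mul_assoc, mul_left_comm]

lemma dot_bGf_nonneg (hHE : E_H ⊆ E) {b : Coord E_H → ℝ}
    (hb : ∀ t : Tube E_H, 0 ≤ dot b (hvec t)) (s : Tube E) :
    0 ≤ dot (bGf E E_H b) (hvec s) := by
  rw [dot_bGf]
  by_cases h : isH E E_H s
  · obtain ⟨t', rfl⟩ := exists_iota_of_isH E E_H hHE h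
    rw [dot_extd, dot_aF_eq_zero E E_H (isH_iota E E_H hHE t')]
    have := hb t'
    linarith
  · have h1 := one_le_dot_aF E E_H h
    have h2 := abs_le_MB E E_H b s
    have h3 := one_le_MB E E_H b
    have h4 : MB E E_H b * 1 ≤ MB E E_H b * dot (aF E E_H) (hvec s) := by
      apply mul_le_mul_of_nonneg_left h1
      linarith
    have h5 := abs_le.1 h2
    linarith

lemma dot_bGf_eq_zero_iff (hHE : E_H ⊆ E) {b : Coord E_H → ℝ}
    (hb : ∀ t : Tube E_H, 0 ≤ dot b (hvec t)) (s : Tube E) :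
    dot (bGf E E_H b) (hvec s) = 0
      ↔ ∃ t' : Tube E_H, iota E E_H hHE t' = s ∧ dot b (hvec t') = 0 := by
  constructor
  · intro h0
    have hH : isH E E_H s := by
      by_contra hn
      have h1 := one_le_dot_aF E E_H hn
      have h2 := abs_le_MB E E_H b s
      have h3 := one_le_MB E E_H b
      have h4 : MB E E_H b * 1 ≤ MB E E_H b * dot (aF E E_H) (hvec s) :=
        mul_le_mul_of_nonneg_left h1 (by linarith)
      have h5 := abs_le.1 h2
      rw [dot_bGf] at h0
      linarith
    obtain ⟨t', rfl⟩ := exists_iota_of_isH E E_H hHE hH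
    refine ⟨t', rfl, ?_⟩
    rw [dot_bGf, dot_extd, dot_aF_eq_zero E E_H (isH_iota E E_H hHE t'), mul_zero,
      add_zero] at h0
    exact h0
  · rintro ⟨t', rfl, h0⟩
    rw [dot_bGf, dot_extd, dot_aF_eq_zero E E_H (isH_iota E E_H hHE t'), mul_zero,
      add_zero]
    exact h0

end Construct
section Iso
variable (E E_H : Finset (Sym2 V))

/-- The forward map on faces. -/
noncomputable def phi (hHE : E_H ⊆ E) (F' : Set (Coord E_H → ℝ)) : Set (Coord E → ℝ) :=
  convexHull ℝ {z | ∃ t : Tube E_H, zvec t ∈ F' ∧ z = zvec (iota E E_H hHE t)}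

/-- The backward map on faces. -/
noncomputable def psi (hHE : E_H ⊆ E) (F'' : Set (Coord E → ℝ)) : Set (Coord E_H → ℝ) :=
  convexHull ℝ {z | ∃ t : Tube E_H, zvec (iota E E_H hHE t) ∈ F'' ∧ z = zvec t}

lemma phi_mono (hHE : E_H ⊆ E) {A B : Set (Coord E_H → ℝ)} (h : A ⊆ B) :
    phi E E_H hHE A ⊆ phi E E_H hHE B :=
  convexHull_mono (by rintro z ⟨t, ht, rfl⟩; exact ⟨t, h ht, rfl⟩)

lemma psi_mono (hHE : E_H ⊆ E) {A B : Set (Coord E → ℝ)} (h : A ⊆ B) :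
    psi E E_H hHE A ⊆ psi E E_H hHE B :=
  convexHull_mono (by rintro z ⟨t, ht, rfl⟩; exact ⟨t, h ht, rfl⟩)

lemma phi_empty (hHE : E_H ⊆ E) : phi E E_H hHE ∅ = ∅ := by
  unfold phi
  rw [show {z | ∃ t : Tube E_H, zvec t ∈ (∅ : Set (Coord E_H → ℝ))
      ∧ z = zvec (iota E E_H hHE t)} = (∅ : Set (Coord E → ℝ)) by ext z; simp]
  exact convexHull_empty

lemma psi_empty (hHE : E_H ⊆ E) : psi E E_H hHE ∅ = ∅ := by
  unfold psi
  rw [show {z | ∃ t : Tube E_H, zvec (iota E E_H hHE t) ∈ (∅ : Set (Coord E → ℝ))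
      ∧ z = zvec t} = (∅ : Set (Coord E_H → ℝ)) by ext z; simp]
  exact convexHull_empty

lemma phi_subset_Fface (hHE : E_H ⊆ E) (F' : Set (Coord E_H → ℝ)) :
    phi E E_H hHE F' ⊆ Fface E E_H := by
  apply convexHull_min
  · rintro z ⟨t, ht, rfl⟩
    exact (zvec_mem_Fface E E_H _).2 (isH_iota E E_H hHE t)
  · exact Convex.inter (convex_convexHull ℝ _) (convex_hyperplane (isLinearMap_dot _) 0)

lemma phi_normFace (hHE : E_H ⊆ E) {b : Coord E_H → ℝ}
    (hb : ∀ t : Tube E_H, 0 ≤ dot b (hvec t)) :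
    phi E E_H hHE {x | x ∈ dualCosmo E_H ∧ dot b x = 0}
      = {x | x ∈ dualCosmo E ∧ dot (bGf E E_H b) x = 0} := by
  rw [face_eq_hull (dot_bGf_nonneg E E_H hHE hb)]
  unfold phi
  congr 1
  ext z
  constructor
  · rintro ⟨t, ht, rfl⟩
    rw [zvec_mem_normFace] at ht
    exact ⟨iota E E_H hHE t, (dot_bGf_eq_zero_iff E E_H hHE hb _).2 ⟨t, rfl, ht⟩, rfl⟩
  · rintro ⟨s, hs, rfl⟩
    obtain ⟨t', rfl, h0⟩ := (dot_bGf_eq_zero_iff E E_H hHE hb s).1 hs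
    exact ⟨t', (zvec_mem_normFace t').2 h0, rfl⟩

lemma pull_nonneg (hHE : E_H ⊆ E) {bG' : Coord E → ℝ}
    (hbG' : ∀ s : Tube E, 0 ≤ dot bG' (hvec s)) (t : Tube E_H) :
    0 ≤ dot (pull E E_H hHE bG') (hvec t) := by
  rw [← dot_pull]; exact hbG' _

lemma psi_normFace (hHE : E_H ⊆ E) {bG' : Coord E → ℝ}
    (hbG' : ∀ s : Tube E, 0 ≤ dot bG' (hvec s)) :
    psi E E_H hHE {x | x ∈ dualCosmo E ∧ dot bG' x = 0}
      = {x | x ∈ dualCosmo E_H ∧ dot (pull E E_H hHE bG') x = 0} := by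
  rw [face_eq_hull (pull_nonneg E E_H hHE hbG')]
  unfold psi
  congr 1
  ext z
  constructor
  · rintro ⟨t, ht, rfl⟩
    rw [zvec_mem_normFace] at ht
    refine ⟨t, ?_, rfl⟩
    rw [← dot_pull]
    exact ht
  · rintro ⟨t, ht, rfl⟩
    refine ⟨t, (zvec_mem_normFace _).2 ?_, rfl⟩
    rw [dot_pull E E_H hHE]
    exact ht

lemma psi_phi_eq (hHE : E_H ⊆ E) {F' : Set (Coord E_H → ℝ)}
    (hF' : IsFace F' (dualCosmo E_H)) : psi E E_H hHE (phi E E_H hHE F') = F' := by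
  rcases isFace_iff.1 hF' with rfl | ⟨b, hb, rfl⟩
  · rw [phi_empty, psi_empty]
  · rw [phi_normFace E E_H hHE hb, psi_normFace E E_H hHE (dot_bGf_nonneg E E_H hHE hb)]
    rw [face_eq_hull (pull_nonneg E E_H hHE (dot_bGf_nonneg E E_H hHE hb)),
      face_eq_hull hb]
    congr 1
    ext z
    constructor
    · rintro ⟨t, ht, rfl⟩
      rw [← dot_pull] at ht
      obtain ⟨t'', heq, h0⟩ := (dot_bGf_eq_zero_iff E E_H hHE hb _).1 ht
      obtain rfl : t'' = t := iota_injective E E_H hHE heq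
      exact ⟨t'', h0, rfl⟩
    · rintro ⟨t, ht, rfl⟩
      refine ⟨t, ?_, rfl⟩
      rw [← dot_pull]
      exact (dot_bGf_eq_zero_iff E E_H hHE hb _).2 ⟨t, rfl, ht⟩

lemma phi_psi_eq (hHE : E_H ⊆ E) {F'' : Set (Coord E → ℝ)}
    (hF'' : IsFace F'' (dualCosmo E)) (hsub : F'' ⊆ Fface E E_H) :
    phi E E_H hHE (psi E E_H hHE F'') = F'' := by
  rcases isFace_iff.1 hF'' with rfl | ⟨bG', hbG', rfl⟩
  · rw [psi_empty, phi_empty]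
  · rw [psi_normFace E E_H hHE hbG', phi_normFace E E_H hHE (pull_nonneg E E_H hHE hbG')]
    rw [face_eq_hull (dot_bGf_nonneg E E_H hHE (pull_nonneg E E_H hHE hbG')),
      face_eq_hull hbG']
    congr 1
    ext z
    constructor
    · rintro ⟨s, hs, rfl⟩
      obtain ⟨t', rfl, h0⟩ := (dot_bGf_eq_zero_iff E E_H hHE
        (pull_nonneg E E_H hHE hbG') s).1 hs
      rw [← dot_pull] at h0
      exact ⟨iota E E_H hHE t', h0, rfl⟩
    · rintro ⟨s, hs, rfl⟩
      have hmem : zvec s ∈ Fface E E_H :=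
        hsub ⟨zvec_mem s, (dot_zvec_eq_zero_iff _ s).2 hs⟩
      obtain ⟨t', rfl⟩ := exists_iota_of_isH E E_H hHE ((zvec_mem_Fface E E_H s).1 hmem)
      refine ⟨iota E E_H hHE t', ?_, rfl⟩
      refine (dot_bGf_eq_zero_iff E E_H hHE (pull_nonneg E E_H hHE hbG') _).2 ⟨t', rfl, ?_⟩
      rw [← dot_pull]
      exact hs

lemma phi_isFace (hHE : E_H ⊆ E) {F' : Set (Coord E_H → ℝ)}
    (hF' : IsFace F' (dualCosmo E_H)) : IsFace (phi E E_H hHE F') (dualCosmo E) := by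
  rcases isFace_iff.1 hF' with rfl | ⟨b, hb, rfl⟩
  · rw [phi_empty]; exact Or.inr (Or.inl rfl)
  · rw [phi_normFace E E_H hHE hb]
    exact normFace_isFace ⟨bGf E E_H b, dot_bGf_nonneg E E_H hHE hb, rfl⟩

lemma psi_isFace (hHE : E_H ⊆ E) {F'' : Set (Coord E → ℝ)}
    (hF'' : IsFace F'' (dualCosmo E)) : IsFace (psi E E_H hHE F'') (dualCosmo E_H) := by
  rcases isFace_iff.1 hF'' with rfl | ⟨bG', hbG', rfl⟩
  · rw [psi_empty]; exact Or.inr (Or.inl rfl)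
  · rw [psi_normFace E E_H hHE hbG']
    exact normFace_isFace ⟨pull E E_H hHE bG', pull_nonneg E E_H hHE hbG', rfl⟩

end Iso

/-- Let `G = (V, E)` be a finite simple graph without isolated
vertices and let `H` be a subgraph of `G` without isolated vertices (so `H` is
determined by its edge set `E_H ⊆ E`, its vertex set being the endpoints of `E_H`).
Then there exists a face `F` of `C_G°` such that the poset of faces of `C_G°` contained
in `F` is isomorphic to the poset of faces of `C_H°`, i.e. `F` is combinatorially
equivalent to `C_H°`. -/
theorem statement15 (E E_H : Finset (Sym2 V)) (hE : ∀ e ∈ E, ¬ e.IsDiag)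
    (hiso : ∀ v : V, ∃ e ∈ E, v ∈ e) (hHE : E_H ⊆ E) :
    ∃ F : Set (Coord E → ℝ), IsFace F (dualCosmo E) ∧
      Nonempty
        ({F' : Set (Coord E_H → ℝ) // IsFace F' (dualCosmo E_H)} ≃o
          {F' : Set (Coord E → ℝ) // IsFace F' (dualCosmo E) ∧ F' ⊆ F}) := by
  refine ⟨Fface E E_H, isFace_Fface E E_H, ⟨?_⟩⟩
  refine ⟨⟨fun F' => ⟨phi E E_H hHE F'.1,
            phi_isFace E E_H hHE F'.2, phi_subset_Fface E E_H hHE F'.1⟩,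
          fun F'' => ⟨psi E E_H hHE F''.1, psi_isFace E E_H hHE F''.2.1⟩,
          fun F' => Subtype.ext (psi_phi_eq E E_H hHE F'.2),
          fun F'' => Subtype.ext (phi_psi_eq E E_H hHE F''.2.1 F''.2.2)⟩, ?_⟩
  intro a b
  constructor
  · intro h
    have h1 : phi E E_H hHE a.1 ⊆ phi E E_H hHE b.1 := h
    have h2 := psi_mono E E_H hHE h1
    rw [psi_phi_eq E E_H hHE a.2, psi_phi_eq E E_H hHE b.2] at h2
    exact h2
  · intro h
    exact phi_mono E E_H hHE h
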